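/- For s ≥ 2, the number of ways to place exactly 4 non-overlapping s×s squares in a 2s×(2s+1) rectangle is T(2s, 2s+1, s, 4) = 9. -/
import Mathlib


/-- The set of cells covered by an `s×s` square whose corner is at `p`. -/
def squareCells (s : ℕ) (p : ℕ × ℕ) : Finset (ℕ × ℕ) :=
  Finset.Ico p.1 (p.1 + s) ×ˢ Finset.Ico p.2 (p.2 + s)

/-- `T n m s k`: the number of ways to place `k` pairwise non-overlapping axis-aligned
`s×s` squares at integer positions inside an `n×m` rectangle (the remaining cells
being covered by `1×1` squares). -/
noncomputable def T (n m s k : ℕ) : ℕ :=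
  Set.ncard {S : Finset (ℕ × ℕ) |
    S.card = k ∧
    (∀ p ∈ S, p.1 + s ≤ n ∧ p.2 + s ≤ m) ∧
    (S : Set (ℕ × ℕ)).Pairwise fun p q => Disjoint (squareCells s p) (squareCells s q)}

/-- `Ttot n m s`: total number of tilings of the `n×m` rectangle by `1×1` and `s×s`
squares (summing over all possible numbers of `s×s` squares). -/
noncomputable def Ttot (n m s : ℕ) : ℕ := ∑ k ∈ Finset.range (n * m + 1), T n m s k

lemma disj_iff (s : ℕ) (hs : 0 < s) (p q : ℕ × ℕ) :
    Disjoint (squareCells s p) (squareCells s q) ↔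
      p.1 + s ≤ q.1 ∨ q.1 + s ≤ p.1 ∨ p.2 + s ≤ q.2 ∨ q.2 + s ≤ p.2 := by
  simp only [squareCells, Finset.disjoint_left, Finset.mem_product, Finset.mem_Ico]
  constructor
  · intro h
    by_contra hc
    push_neg at hc
    exact h (a := (max p.1 q.1, max p.2 q.2))
      ⟨⟨by omega, by omega⟩, by omega, by omega⟩
      ⟨⟨by omega, by omega⟩, by omega, by omega⟩
  · rintro h x ⟨⟨h1, h2⟩, h3, h4⟩ ⟨⟨h5, h6⟩, h7, h8⟩
    omega

def Pb (s : ℕ) : Finset (ℕ × ℕ) := {(0, s), (0, s + 1), (1, s + 1)}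

def fb (s : ℕ) (bc : (ℕ × ℕ) × (ℕ × ℕ)) : Finset (ℕ × ℕ) :=
  {(0, bc.1.1), (0, bc.1.2), (s, bc.2.1), (s, bc.2.2)}

theorem stmt_19 (s : ℕ) (hs : 2 ≤ s) :
    T (2 * s) (2 * s + 1) s 4 = 9 := by
  have hset : {S : Finset (ℕ × ℕ) |
      S.card = 4 ∧
      (∀ p ∈ S, p.1 + s ≤ 2 * s ∧ p.2 + s ≤ 2 * s + 1) ∧
      (S : Set (ℕ × ℕ)).Pairwise fun p q => Disjoint (squareCells s p) (squareCells s q)}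
      = ↑((Pb s ×ˢ Pb s).image (fb s)) := by
    ext S
    simp only [Set.mem_setOf_eq, Finset.coe_image, Set.mem_image, Finset.mem_coe,
      Finset.mem_product]
    constructor
    · rintro ⟨hcard, hbound, hdisj⟩
      have key : ∀ p ∈ S, ∀ q ∈ S, p ≠ q →
          p.1 + s ≤ q.1 ∨ q.1 + s ≤ p.1 ∨ p.2 + s ≤ q.2 ∨ q.2 + s ≤ p.2 :=
        fun p hp q hq hpq => (disj_iff s (by omega) p q).1 (hdisj hp hq hpq)
      have hbd : ∀ p ∈ S, p.1 ≤ s ∧ p.2 ≤ s + 1 := by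
        intro p hp; have := hbound p hp; omega
      set U := S.filter (fun p => p.1 ≠ s) with hUdef
      set V := S.filter (fun p => p.1 ≠ 0) with hVdef
      have hUcard : U.card ≤ 2 := by
        by_contra h
        push_neg at h
        obtain ⟨a, b, c, ha, hb, hc, hab, hac, hbc⟩ := Finset.two_lt_card_iff.1 h
        simp only [hUdef, Finset.mem_filter] at ha hb hc
        have k1 := key a ha.1 b hb.1 hab
        have k2 := key a ha.1 c hc.1 hac
        have k3 := key b hb.1 c hc.1 hbc
        have b1 := hbd a ha.1; have b2 := hbd b hb.1; have b3 := hbd c hc.1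
        have := ha.2; have := hb.2; have := hc.2
        omega
      have hVcard : V.card ≤ 2 := by
        by_contra h
        push_neg at h
        obtain ⟨a, b, c, ha, hb, hc, hab, hac, hbc⟩ := Finset.two_lt_card_iff.1 h
        simp only [hVdef, Finset.mem_filter] at ha hb hc
        have k1 := key a ha.1 b hb.1 hab
        have k2 := key a ha.1 c hc.1 hac
        have k3 := key b hb.1 c hc.1 hbc
        have b1 := hbd a ha.1; have b2 := hbd b hb.1; have b3 := hbd c hc.1
        have := ha.2; have := hb.2; have := hc.2
        omega
      have hsub : S ⊆ U ∪ V := by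
        intro p hp
        simp only [hUdef, hVdef, Finset.mem_union, Finset.mem_filter]
        by_cases h : p.1 = s
        · right; exact ⟨hp, by omega⟩
        · left; exact ⟨hp, h⟩
      have hUV4 : 4 ≤ (U ∪ V).card := hcard ▸ Finset.card_le_card hsub
      have hinter := Finset.card_union_add_card_inter U V
      have hU2 : U.card = 2 := by omega
      have hV2 : V.card = 2 := by omega
      have hI0 : (U ∩ V).card = 0 := by omega
      have hIe : U ∩ V = ∅ := Finset.card_eq_zero.1 hI0
      have hUsub : U ⊆ S := Finset.filter_subset _ _
      have hVsub : V ⊆ S := Finset.filter_subset _ _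
      have hSU : S = U ∪ V :=
        (Finset.eq_of_subset_of_card_le (Finset.union_subset hUsub hVsub)
          (by omega)).symm
      have hU0 : ∀ p ∈ U, p.1 = 0 := by
        intro p hp
        have : p ∉ V := fun hv => (Finset.notMem_empty p) (hIe ▸ Finset.mem_inter.2 ⟨hp, hv⟩)
        simp only [hVdef, Finset.mem_filter, not_and, not_not] at this
        exact this (hUsub hp)
      have hVs : ∀ p ∈ V, p.1 = s := by
        intro p hp
        have : p ∉ U := fun hu => (Finset.notMem_empty p) (hIe ▸ Finset.mem_inter.2 ⟨hu, hp⟩)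
        simp only [hUdef, Finset.mem_filter, not_and, not_not] at this
        exact this (hVsub hp)
      obtain ⟨x, y, hxy, hUxy⟩ := Finset.card_eq_two.1 hU2
      obtain ⟨z, w, hzw, hVzw⟩ := Finset.card_eq_two.1 hV2
      have hx1 : x.1 = 0 := hU0 x (hUxy ▸ by simp)
      have hy1 : y.1 = 0 := hU0 y (hUxy ▸ by simp)
      have hz1 : z.1 = s := hVs z (hVzw ▸ by simp)
      have hw1 : w.1 = s := hVs w (hVzw ▸ by simp)
      have hxS : x ∈ S := hUsub (hUxy ▸ by simp)
      have hyS : y ∈ S := hUsub (hUxy ▸ by simp)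
      have hzS : z ∈ S := hVsub (hVzw ▸ by simp)
      have hwS : w ∈ S := hVsub (hVzw ▸ by simp)
      have kxy := key x hxS y hyS hxy
      have kzw := key z hzS w hwS hzw
      have bx := hbd x hxS; have by' := hbd y hyS
      have bz := hbd z hzS; have bw := hbd w hwS
      refine ⟨((min x.2 y.2, max x.2 y.2), (min z.2 w.2, max z.2 w.2)), ⟨?_, ?_⟩, ?_⟩
      · simp only [Pb, Finset.mem_insert, Finset.mem_singleton, Prod.mk.injEq]
        omega
      · simp only [Pb, Finset.mem_insert, Finset.mem_singleton, Prod.mk.injEq]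
        omega
      · have hxe : x = (0, x.2) := by rw [← hx1]
        have hye : y = (0, y.2) := by rw [← hy1]
        have hze : z = (s, z.2) := by rw [← hz1]
        have hwe : w = (s, w.2) := by rw [← hw1]
        rw [fb]
        rw [hSU, hUxy, hVzw]
        ext p
        simp only [Finset.mem_union, Finset.mem_insert, Finset.mem_singleton]
        constructor
        · rintro (h | h | h | h) <;> rw [h] <;>
            simp [hxe.symm, hye.symm, hze.symm, hwe.symm, Prod.ext_iff] <;> omega
        · rintro ((h | h) | (h | h)) <;> rw [h] <;>
            simp [Prod.ext_iff] <;> omega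
    · rintro ⟨⟨⟨b1, b2⟩, ⟨c1, c2⟩⟩, ⟨h1, h2⟩, rfl⟩
      simp only [Pb, Finset.mem_insert, Finset.mem_singleton, Prod.mk.injEq] at h1 h2
      refine ⟨?_, ?_, ?_⟩
      · rw [fb]
        rw [Finset.card_insert_of_notMem (by simp [Prod.ext_iff]; omega),
          Finset.card_insert_of_notMem (by simp [Prod.ext_iff]; omega),
          Finset.card_insert_of_notMem (by simp [Prod.ext_iff]; omega),
          Finset.card_singleton]
      · intro p hp
        simp only [fb, Finset.mem_insert, Finset.mem_singleton, Prod.ext_iff] at hp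
        omega
      · intro p hp q hq hpq
        rw [disj_iff s (by omega)]
        simp only [fb, Finset.coe_insert, Set.mem_insert_iff, Finset.coe_singleton,
          Set.mem_singleton_iff, Prod.ext_iff] at hp hq
        rw [Ne, Prod.ext_iff] at hpq
        omega
  rw [T, hset, Set.ncard_coe_finset]
  have hinj : Set.InjOn (fb s) ↑(Pb s ×ˢ Pb s) := by
    rintro ⟨⟨b1, b2⟩, ⟨c1, c2⟩⟩ h1 ⟨⟨b1', b2'⟩, ⟨c1', c2'⟩⟩ h2 heq
    simp only [Finset.coe_product, Set.mem_prod, Finset.mem_coe, Pb, Finset.mem_insert,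
      Finset.mem_singleton, Prod.mk.injEq] at h1 h2
    have h := Finset.ext_iff.mp heq
    have e1 := h (0, b1); have e2 := h (0, b2); have e3 := h (s, c1); have e4 := h (s, c2)
    have e5 := h (0, b1'); have e6 := h (0, b2'); have e7 := h (s, c1'); have e8 := h (s, c2')
    simp only [fb, Finset.mem_insert, Finset.mem_singleton, Prod.mk.injEq, true_and,
      true_or, or_true, true_iff, iff_true] at e1 e2 e3 e4 e5 e6 e7 e8
    simp only [Prod.mk.injEq]
    omega
  rw [Finset.card_image_of_injOn hinj, Finset.card_product]
  have : (Pb s).card = 3 := by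
    rw [Pb, Finset.card_insert_of_notMem (by simp [Prod.ext_iff]),
      Finset.card_insert_of_notMem (by simp [Prod.ext_iff]), Finset.card_singleton]
  rw [this]
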